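/- arXiv:1906.09942 — 4 statements merged into one kernel-verified Lean document; each statement's English description precedes it below -/
import Mathlib

section
/- Under the hypotheses of the 2×2 swap with an alternating pair (A* = A, B* = -B) and distinct poles: if (X,Y) is the unique pair of unit lower triangular 2×2 matrices solving (AF)X = Y(ǍF) and (BF)X = Y(B̌F), then X = F Y^{-*} F (equivalently, the pair (F Y^{-*} F, F X^{-*} F) also solves the equations, hence equals (X,Y)). -/
open Matrix

/-- For a 2×2 alternating anti-triangular pencil with distinct poles, the unique unit
lower triangular solution `(X, Y)` of `(AF)X = Y(ǍF)`, `(BF)X = Y(B̌F)` satisfies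
`X = F Y⁻ᴴ F`. -/
theorem swap_symmetry_alternating
    (A B : Matrix (Fin 2) (Fin 2) ℂ)
    (hAh : Aᴴ = A) (hBh : Bᴴ = -B)
    (hAat : A 0 0 = 0) (hBat : B 0 0 = 0)
    (hd : A 0 1 * B 1 0 - B 0 1 * A 1 0 ≠ 0)
    (x y : ℂ)
    (F : Matrix (Fin 2) (Fin 2) ℂ) (hF : F = !![(0 : ℂ), 1; 1, 0])
    (X Y : Matrix (Fin 2) (Fin 2) ℂ)
    (hX : X = !![(1 : ℂ), 0; x, 1]) (hY : Y = !![(1 : ℂ), 0; y, 1])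
    (Acheck Bcheck : Matrix (Fin 2) (Fin 2) ℂ)
    (hAc : Acheck = !![(0 : ℂ), A 0 1; A 1 0, 0])
    (hBc : Bcheck = !![(0 : ℂ), B 0 1; B 1 0, 0])
    (heqA : (A * F) * X = Y * (Acheck * F))
    (heqB : (B * F) * X = Y * (Bcheck * F)) :
    X = F * (Y⁻¹)ᴴ * F := by
  subst hF hX hY hAc hBc
  set c := starRingEnd ℂ
  -- entrywise facts from hermitian/skew-hermitian hypotheses
  have hA01 : c (A 1 0) = A 0 1 := by
    have := congrFun (congrFun hAh 0) 1
    simpa [Matrix.conjTranspose_apply] using this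
  have hA10 : c (A 0 1) = A 1 0 := by
    have := congrFun (congrFun hAh 1) 0
    simpa [Matrix.conjTranspose_apply] using this
  have hA11 : c (A 1 1) = A 1 1 := by
    have := congrFun (congrFun hAh 1) 1
    simpa [Matrix.conjTranspose_apply] using this
  have hB01 : c (B 1 0) = -B 0 1 := by
    have := congrFun (congrFun hBh 0) 1
    simpa [Matrix.conjTranspose_apply] using this
  have hB10 : c (B 0 1) = -B 1 0 := by
    have := congrFun (congrFun hBh 1) 0
    simpa [Matrix.conjTranspose_apply] using this
  have hB11 : c (B 1 1) = -B 1 1 := by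
    have := congrFun (congrFun hBh 1) 1
    simpa [Matrix.conjTranspose_apply] using this
  -- extract the scalar equations
  have e1 : A 1 1 + A 1 0 * x = y * A 0 1 := by
    have := congrFun (congrFun heqA 1) 0
    simpa [Matrix.mul_apply, Fin.sum_univ_two] using this
  have e2 : B 1 1 + B 1 0 * x = y * B 0 1 := by
    have := congrFun (congrFun heqB 1) 0
    simpa [Matrix.mul_apply, Fin.sum_univ_two] using this
  -- conjugated equations
  have e1' : A 1 1 + A 0 1 * c x = c y * A 1 0 := by
    have := congrArg c e1
    simp only [map_add, _root_.map_mul, hA10, hA01, hA11] at this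
    linear_combination this
  have e2' : B 1 1 + B 0 1 * c x = c y * B 1 0 := by
    have := congrArg c e2
    simp only [map_add, _root_.map_mul, hB10, hB01, hB11] at this
    linear_combination -this
  -- key: x = - conj y
  have key : x = - c y := by
    have h0 : (x + c y) * (A 0 1 * B 1 0 - B 0 1 * A 1 0) = 0 := by
      linear_combination (-(B 0 1)) * e1 + (A 0 1) * e2 + (B 0 1) * e1' - (A 0 1) * e2'
    rcases mul_eq_zero.mp h0 with h | h
    · exact eq_neg_of_add_eq_zero_left h
    · exact absurd h hd
  -- compute the inverse of Y
  have hYinv : (!![(1 : ℂ), 0; y, 1])⁻¹ = !![(1 : ℂ), 0; -y, 1] := by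
    apply inv_eq_right_inv
    simp [Matrix.mul_fin_two, Matrix.one_fin_two]
  rw [hYinv]
  have hct : (!![(1 : ℂ), 0; -y, 1])ᴴ = !![(1 : ℂ), c (-y); 0, 1] := by
    ext i j
    fin_cases i <;> fin_cases j <;> simp [Matrix.conjTranspose_apply, c]
  rw [hct]
  simp [Matrix.mul_fin_two, key, c]
end

section
/- Under the hypotheses of the 2×2 swap with a palindromic pair (B = A*) and distinct poles: if (X,Y) is the unique pair of unit lower triangular matrices solving (AF)X = Y(ǍF) and (BF)X = Y(B̌F), then X = F Y^{-*} F. -/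
open Matrix

/-- For a 2×2 palindromic anti-triangular pencil (`B = Aᴴ`) with distinct poles, the
unique unit lower triangular solution `(X, Y)` of `(AF)X = Y(ǍF)`, `(BF)X = Y(B̌F)`
satisfies `X = F Y⁻ᴴ F`. -/
theorem swap_symmetry_palindromic
    (A B : Matrix (Fin 2) (Fin 2) ℂ)
    (hpal : B = Aᴴ)
    (hAat : A 0 0 = 0)
    (hd : A 0 1 * B 1 0 - B 0 1 * A 1 0 ≠ 0)
    (x y : ℂ)
    (F : Matrix (Fin 2) (Fin 2) ℂ) (hF : F = !![(0 : ℂ), 1; 1, 0])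
    (X Y : Matrix (Fin 2) (Fin 2) ℂ)
    (hX : X = !![(1 : ℂ), 0; x, 1]) (hY : Y = !![(1 : ℂ), 0; y, 1])
    (Acheck Bcheck : Matrix (Fin 2) (Fin 2) ℂ)
    (hAc : Acheck = !![(0 : ℂ), A 0 1; A 1 0, 0])
    (hBc : Bcheck = !![(0 : ℂ), B 0 1; B 1 0, 0])
    (heqA : (A * F) * X = Y * (Acheck * F))
    (heqB : (B * F) * X = Y * (Bcheck * F)) :
    X = F * (Y⁻¹)ᴴ * F := by
  subst hpal hF hX hY hAc hBc
  have e1 := congrFun (congrFun heqA 1) 0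
  have e2 := congrFun (congrFun heqB 1) 0
  simp [Matrix.mul_apply, Fin.sum_univ_two, Matrix.conjTranspose_apply] at e1 e2 hd
  have e3 := congrArg (starRingEnd ℂ) e1
  have e4 := congrArg (starRingEnd ℂ) e2
  simp only [map_add, _root_.map_mul, RingHomCompTriple.comp_apply, RingHom.id_apply,
    Complex.conj_conj] at e3 e4
  have key : (A 0 1 * (starRingEnd ℂ) (A 0 1) - (starRingEnd ℂ) (A 1 0) * A 1 0)
      * (x + (starRingEnd ℂ) y) = 0 := by
    linear_combination (A 0 1) * e2 - (A 0 1) * e3 - ((starRingEnd ℂ) (A 1 0)) * e1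
      + ((starRingEnd ℂ) (A 1 0)) * e4
  have hxy : x = -(starRingEnd ℂ) y := by
    rcases mul_eq_zero.mp key with h | h
    · exact absurd h hd
    · linear_combination h
  have hinv : (!![(1:ℂ), 0; y, 1])⁻¹ = !![(1:ℂ), 0; -y, 1] := by
    apply inv_eq_left_inv
    rw [Matrix.one_fin_two]; norm_num [Matrix.mul_fin_two]
  rw [hinv, hxy]
  ext i j
  fin_cases i <;> fin_cases j <;>
    simp [Matrix.mul_apply, Fin.sum_univ_two, Matrix.conjTranspose_apply,
      Matrix.vecMul, dotProduct, Fin.sum_univ_two]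
end

section
/- Let X be unit lower triangular and Y unit lower triangular 2×2 complex matrices with X = F Y^{-*} F, where F is the flip matrix. If FX = QR and Y = PS are QR decompositions with R, S upper triangular having positive real diagonal entries, then Q = PF. -/
open Matrix
open scoped ComplexOrder

/-!
Since `F² = 1`, `FX = Y⁻ᴴ F = P S⁻ᴴ F`, hence `Q (R T) = P F` with `T = F Sᴴ F`. Conjugation by
the flip turns the lower triangular `Sᴴ` into the upper triangular `T`, whose diagonal is that of
`S` reversed, so `Q (R T) = (P F) 1` are two QR decompositions of the same matrix. The unitary
factor of such a decomposition is unique: `Q₂ᴴ Q₁ = R₂ R₁⁻¹` is unitary and upper triangular with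
positive diagonal, and such a matrix is the identity.
-/

namespace Matrix

variable {n : Type*} [Fintype n] [LinearOrder n]

theorem IsUpperTriangular.mul_apply_diag {R : Type*} [NonUnitalNonAssocSemiring R]
    {A B : Matrix n n R} (hA : A.IsUpperTriangular) (hB : B.IsUpperTriangular) (i : n) :
    (A * B) i i = A i i * B i i := by
  rw [mul_apply, Finset.sum_eq_single i]
  · intro k _ hki
    rcases hki.lt_or_gt with hk | hk
    · rw [hA hk, zero_mul]
    · rw [hB hk, mul_zero]
  · simp

variable [DecidableEq n]

theorem IsUpperTriangular.isUnit_det {K : Type*} [Field K] {A : Matrix n n K}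
    (hA : A.IsUpperTriangular) (hdiag : ∀ i, A i i ≠ 0) : IsUnit A.det := by
  rw [det_of_isUpperTriangular hA, isUnit_iff_ne_zero, Finset.prod_ne_zero_iff]
  exact fun i _ => hdiag i

theorem IsUpperTriangular.conjTranspose_of_mem_unitaryGroup {R : Type*} [CommRing R] [StarRing R]
    {U : Matrix n n R} (hU : U ∈ unitaryGroup n R) (hUt : U.IsUpperTriangular) :
    Uᴴ.IsUpperTriangular := by
  have hUU : Uᴴ * U = 1 := hU.1
  let := invertibleOfLeftInverse U Uᴴ hUU
  rw [← inv_eq_left_inv hUU]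
  exact blockTriangular_inv_of_blockTriangular hUt

variable {𝕜 : Type*} [RCLike 𝕜]

theorem eq_one_of_mem_unitaryGroup_of_isUpperTriangular {U : Matrix n n 𝕜}
    (hU : U ∈ unitaryGroup n 𝕜) (hUt : U.IsUpperTriangular) (hpos : ∀ i, 0 < U i i) :
    U = 1 := by
  have hUHt := hUt.conjTranspose_of_mem_unitaryGroup hU
  ext i j
  rcases lt_trichotomy i j with hij | rfl | hij
  · simpa [one_apply_ne hij.ne] using congrArg star (hUHt hij)
  · obtain ⟨r, hr, hri⟩ := RCLike.pos_iff_exists_ofReal.1 (hpos i)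
    have hnorm : Uᴴ i i * U i i = 1 := by
      rw [← hUHt.mul_apply_diag hUt, show Uᴴ * U = 1 from hU.1, one_apply_eq]
    rw [conjTranspose_apply, ← hri, RCLike.star_def, RCLike.conj_ofReal] at hnorm
    have hr1 : r = 1 := by
      have : r * r = 1 := by exact_mod_cast hnorm
      nlinarith
    rw [← hri, hr1, one_apply_eq, RCLike.ofReal_one]
  · rw [hUt hij, one_apply_ne hij.ne']

theorem eq_of_mul_eq_mul_of_isUpperTriangular {Q₁ Q₂ R₁ R₂ : Matrix n n 𝕜}
    (hQ₁ : Q₁ ∈ unitaryGroup n 𝕜) (hQ₂ : Q₂ ∈ unitaryGroup n 𝕜)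
    (hR₁ : R₁.IsUpperTriangular) (hR₂ : R₂.IsUpperTriangular)
    (hR₁pos : ∀ i, 0 < R₁ i i) (hR₂pos : ∀ i, 0 < R₂ i i)
    (h : Q₁ * R₁ = Q₂ * R₂) : Q₁ = Q₂ := by
  have hQ₂Q₂ : Q₂ᴴ * Q₂ = 1 := hQ₂.1
  set U := Q₂ᴴ * Q₁
  have hUR : U * R₁ = R₂ := by
    rw [mul_assoc, h, ← mul_assoc, hQ₂Q₂, one_mul]
  have hR₁det : IsUnit R₁.det := hR₁.isUnit_det fun i => (hR₁pos i).ne'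
  have hUt : U.IsUpperTriangular := by
    let := R₁.invertibleOfIsUnitDet hR₁det
    rw [← mul_nonsing_inv_cancel_right R₁ U hR₁det, hUR]
    exact hR₂.mul (blockTriangular_inv_of_blockTriangular hR₁)
  have hUpos (i : n) : 0 < U i i := by
    have hi : U i i * R₁ i i = R₂ i i := hUR ▸ (hUt.mul_apply_diag hR₁ i).symm
    rw [eq_div_of_mul_eq (hR₁pos i).ne' hi]
    exact div_pos (hR₂pos i) (hR₁pos i)
  have hU1 : U = 1 :=
    eq_one_of_mem_unitaryGroup_of_isUpperTriangular
      (Submonoid.mul_mem _ (Unitary.star_mem hQ₂) hQ₁) hUt hUpos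
  have hQ₂Q₂' : Q₂ * Q₂ᴴ = 1 := hQ₂.2
  calc Q₁ = Q₂ * U := by rw [← mul_assoc, hQ₂Q₂', one_mul]
    _ = Q₂ := by rw [hU1, mul_one]

theorem isUpperTriangular_fin_two {R : Type*} [Zero R] {A : Matrix (Fin 2) (Fin 2) R}
    (h : A 1 0 = 0) : A.IsUpperTriangular := by
  intro i j hij
  fin_cases i <;> fin_cases j <;> first | exact h | exact absurd hij (by decide)

theorem flip_mul_mul_flip {R : Type*} [Semiring R] (A : Matrix (Fin 2) (Fin 2) R) :
    !![0, 1; 1, 0] * A * !![0, 1; 1, 0] = !![A 1 1, A 1 0; A 0 1, A 0 0] := by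
  rw [eta_fin_two A, mul_fin_two, mul_fin_two]
  simp

theorem flip_mul_flip {R : Type*} [Semiring R] :
    !![(0 : R), 1; 1, 0] * !![0, 1; 1, 0] = 1 := by
  rw [mul_fin_two, one_fin_two]
  simp

theorem flip_mem_unitaryGroup {R : Type*} [CommRing R] [StarRing R] :
    !![(0 : R), 1; 1, 0] ∈ unitaryGroup (Fin 2) R := by
  have hstar : star !![(0 : R), 1; 1, 0] = !![0, 1; 1, 0] := by
    ext i j
    fin_cases i <;> fin_cases j <;> simp
  exact mem_unitaryGroup_iff.2 (by rw [hstar]; exact flip_mul_flip)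

end Matrix

theorem qr_factors_related_general
    (F : Matrix (Fin 2) (Fin 2) ℂ) (hF : F = !![(0 : ℂ), 1; 1, 0])
    (X Y : Matrix (Fin 2) (Fin 2) ℂ)
    (hXY : X = F * (Y⁻¹)ᴴ * F)
    (Q P R S : Matrix (Fin 2) (Fin 2) ℂ)
    (hQ : Q ∈ Matrix.unitaryGroup (Fin 2) ℂ)
    (hP : P ∈ Matrix.unitaryGroup (Fin 2) ℂ)
    (hRtri : R 1 0 = 0) (hStri : S 1 0 = 0)
    (hRdiag : ∀ i : Fin 2, (R i i).im = 0 ∧ 0 < (R i i).re)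
    (hSdiag : ∀ i : Fin 2, (S i i).im = 0 ∧ 0 < (S i i).re)
    (hQR : F * X = Q * R) (hPS : Y = P * S) :
    Q = P * F := by
  have hRpos (i : Fin 2) : 0 < R i i := Complex.pos_iff.2 ⟨(hRdiag i).2, (hRdiag i).1.symm⟩
  have hSpos (i : Fin 2) : 0 < S i i := Complex.pos_iff.2 ⟨(hSdiag i).2, (hSdiag i).1.symm⟩
  have hR := isUpperTriangular_fin_two hRtri
  have hS := isUpperTriangular_fin_two hStri
  have hF₂ (A : Matrix (Fin 2) (Fin 2) ℂ) : F * (F * A) = A := by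
    rw [← mul_assoc, hF, flip_mul_flip, one_mul]
  set T := F * Sᴴ * F
  have hT : T = !![star (S 1 1), star (S 0 1); star (S 1 0), star (S 0 0)] := by
    simp only [T, hF, flip_mul_mul_flip, conjTranspose_apply]
  have hTtri : T.IsUpperTriangular := isUpperTriangular_fin_two (by simp [hT, hStri])
  have hTpos (i : Fin 2) : 0 < T i i := by
    fin_cases i <;> simp [hT, (hSpos _).le.isSelfAdjoint.star_eq, hSpos]
  have hYinv : (Y⁻¹)ᴴ = P * (Sᴴ)⁻¹ := by
    rw [hPS, Matrix.mul_inv_rev, inv_eq_left_inv (show Pᴴ * P = 1 from hP.1), conjTranspose_mul,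
      conjTranspose_conjTranspose, conjTranspose_nonsing_inv]
  have hSS : (Sᴴ)⁻¹ * Sᴴ = 1 := by
    rw [← conjTranspose_nonsing_inv, ← conjTranspose_mul,
      mul_nonsing_inv _ (hS.isUnit_det fun i => (hSpos i).ne'), conjTranspose_one]
  have hQRT : Q * (R * T) = (P * F) * 1 := by
    rw [← mul_assoc, ← hQR, hXY, hYinv]
    simp only [T, mul_assoc, hF₂, mul_one]
    rw [← mul_assoc (Sᴴ)⁻¹, hSS, one_mul]
  have hPF : P * F ∈ unitaryGroup (Fin 2) ℂ := Submonoid.mul_mem _ hP (hF ▸ flip_mem_unitaryGroup)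
  exact eq_of_mul_eq_mul_of_isUpperTriangular hQ hPF (hR.mul hTtri) blockTriangular_one
    (fun i => hR.mul_apply_diag hTtri i ▸ mul_pos (hRpos i) (hTpos i)) (fun _ => by simp) hQRT

/-- If `X`, `Y` are unit lower triangular 2×2 matrices with `X = F Y⁻ᴴ F`, and
`FX = QR`, `Y = PS` are QR decompositions (with `Q`, `P` unitary and `R`, `S` upper
triangular with positive real diagonal entries), then `Q = PF`. -/
theorem qr_factors_related
    (x y : ℂ)
    (F : Matrix (Fin 2) (Fin 2) ℂ) (hF : F = !![(0 : ℂ), 1; 1, 0])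
    (X Y : Matrix (Fin 2) (Fin 2) ℂ)
    (hX : X = !![(1 : ℂ), 0; x, 1]) (hY : Y = !![(1 : ℂ), 0; y, 1])
    (hXY : X = F * (Y⁻¹)ᴴ * F)
    (Q P R S : Matrix (Fin 2) (Fin 2) ℂ)
    (hQ : Q ∈ Matrix.unitaryGroup (Fin 2) ℂ)
    (hP : P ∈ Matrix.unitaryGroup (Fin 2) ℂ)
    (hRtri : R 1 0 = 0) (hStri : S 1 0 = 0)
    (hRdiag : ∀ i : Fin 2, (R i i).im = 0 ∧ 0 < (R i i).re)
    (hSdiag : ∀ i : Fin 2, (S i i).im = 0 ∧ 0 < (S i i).re)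
    (hQR : F * X = Q * R) (hPS : Y = P * S) :
    Q = P * F :=
  qr_factors_related_general F hF X Y hXY Q P R S hQ hP hRtri hStri hRdiag hSdiag hQR hPS
end

section
/- Let A₁₂, A₂₁, B₁₂, B₂₁, A₂₂, B₂₂, E₁₁, G₁₁ be m×m complex matrices such that the Sylvester-type linear system A₁₂X + YA₂₁ + E₁₁ = 0, B₁₂X + YB₂₁ + G₁₁ = 0 has a unique solution (X,Y). Suppose the alternating symmetry holds: A₁₂* = A₂₁, E₁₁* = E₁₁, B₁₂* = -B₂₁, G₁₁* = -G₁₁. Then the unique solution satisfies Y = X*. -/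
open Matrix

/-- If the Sylvester system `A₁₂X + YA₂₁ + E₁₁ = 0`, `B₁₂X + YB₂₁ + G₁₁ = 0` has a
unique solution and the alternating symmetry holds (`A₁₂ᴴ = A₂₁`, `E₁₁ᴴ = E₁₁`,
`B₁₂ᴴ = -B₂₁`, `G₁₁ᴴ = -G₁₁`), then the unique solution satisfies `Y = Xᴴ`. -/
theorem sylvester_alternating_symmetry {m : ℕ}
    (A₁₂ A₂₁ B₁₂ B₂₁ E₁₁ G₁₁ : Matrix (Fin m) (Fin m) ℂ)
    (hsymA : A₁₂ᴴ = A₂₁) (hsymE : E₁₁ᴴ = E₁₁)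
    (hsymB : B₁₂ᴴ = -B₂₁) (hsymG : G₁₁ᴴ = -G₁₁)
    (huniq : ∃! p : Matrix (Fin m) (Fin m) ℂ × Matrix (Fin m) (Fin m) ℂ,
      A₁₂ * p.1 + p.2 * A₂₁ + E₁₁ = 0 ∧ B₁₂ * p.1 + p.2 * B₂₁ + G₁₁ = 0)
    (X Y : Matrix (Fin m) (Fin m) ℂ)
    (hXY : A₁₂ * X + Y * A₂₁ + E₁₁ = 0 ∧ B₁₂ * X + Y * B₂₁ + G₁₁ = 0) :
    Y = Xᴴ := by
  obtain ⟨p, _, hp⟩ := huniq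
  have hA : A₂₁ᴴ = A₁₂ := by rw [← hsymA, conjTranspose_conjTranspose]
  have hB : B₂₁ᴴ = -B₁₂ := by
    have : B₂₁ = -B₁₂ᴴ := by rw [hsymB, neg_neg]
    rw [this, conjTranspose_neg, conjTranspose_conjTranspose]
  have h1 : A₁₂ * Yᴴ + Xᴴ * A₂₁ + E₁₁ = 0 := by
    have := congrArg conjTranspose hXY.1
    rw [conjTranspose_add, conjTranspose_add, conjTranspose_mul, conjTranspose_mul,
      conjTranspose_zero, hsymA, hA, hsymE] at this
    linear_combination (norm := abel) this
  have h2 : B₁₂ * Yᴴ + Xᴴ * B₂₁ + G₁₁ = 0 := by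
    have := congrArg conjTranspose hXY.2
    rw [conjTranspose_add, conjTranspose_add, conjTranspose_mul, conjTranspose_mul,
      conjTranspose_zero, hsymB, hB, hsymG, Matrix.mul_neg, Matrix.neg_mul] at this
    have := congrArg Neg.neg this
    simp only [neg_add, neg_neg, neg_zero] at this
    linear_combination (norm := abel) this
  have e1 := hp (X, Y) hXY
  have e2 := hp (Yᴴ, Xᴴ) ⟨h1, h2⟩
  have : (X, Y) = ((Yᴴ : Matrix (Fin m) (Fin m) ℂ), Xᴴ) := e1.trans e2.symm
  exact (congrArg Prod.snd this)
end
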